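/- arXiv:1204.5275 — 3 statements merged into one kernel-verified Lean document; each statement's English description precedes it below -/
import Mathlib

section
/- Let d ≥ 1, let ω : ℝ₊ × Ω → (0,∞) be C¹, let g : ℝ₊ × Ω × ℝ^d → ℝ be C¹, define f(t,x,v) = ω(t,x)^{−d} g(t,x,v/ω(t,x)), and let S : ℝ₊ × Ω × ℝ^d → ℝ. If f satisfies the kinetic equation ∂f/∂t + v·∇_x f = S(t,x,v) for all (t,x,v), then g satisfies the rescaled conservative equation ∂g/∂t + div_x(ω ξ g) − div_ξ[ ( (1/ω)(∂ω/∂t) ξ + (ξ ⊗ ξ) ∇_x ω ) g ] = ω^d S(t,x,ωξ) for all (t,x,ξ), where (ξ ⊗ ξ)∇_x ω denotes the vector (ξ·∇_x ω) ξ. -/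
open scoped BigOperators

lemma euclid_sum_single {d : ℕ} (x : EuclideanSpace ℝ (Fin d)) :
    ∑ i, x i • EuclideanSpace.single i (1:ℝ) = x := by
  ext j
  rw [show ((∑ i, x i • EuclideanSpace.single i (1:ℝ)) j)
      = ∑ i, (x i • EuclideanSpace.single i (1:ℝ)) j from by rw [WithLp.ofLp_sum, Finset.sum_apply]]
  simp [EuclideanSpace.single_apply]

lemma clm_apply_sum {d : ℕ} (D : EuclideanSpace ℝ (Fin d) →L[ℝ] ℝ)
    (x : EuclideanSpace ℝ (Fin d)) :
    D x = ∑ i, x i * D (EuclideanSpace.single i 1) := by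
  conv_lhs => rw [← euclid_sum_single x]
  rw [map_sum]
  simp [smul_eq_mul]

/-- Divergence of a vector field on `ℝ^d`. -/
noncomputable def diverg {d : ℕ}
    (F : EuclideanSpace ℝ (Fin d) → EuclideanSpace ℝ (Fin d))
    (x : EuclideanSpace ℝ (Fin d)) : ℝ :=
  ∑ i, fderiv ℝ F x (EuclideanSpace.single i 1) i


lemma diverg_smul_const {d : ℕ} (h : EuclideanSpace ℝ (Fin d) → ℝ)
    (c x : EuclideanSpace ℝ (Fin d)) (hh : DifferentiableAt ℝ h x) :
    diverg (fun y => h y • c) x = fderiv ℝ h x c := by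
  have hD := hh.hasFDerivAt.smul_const c
  rw [diverg, hD.fderiv]
  simp only [ContinuousLinearMap.smulRight_apply, PiLp.smul_apply, smul_eq_mul]
  rw [clm_apply_sum (fderiv ℝ h x) c]
  exact Finset.sum_congr rfl fun i _ => mul_comm _ _

lemma diverg_smul_id {d : ℕ} (φ : EuclideanSpace ℝ (Fin d) → ℝ)
    (ξ : EuclideanSpace ℝ (Fin d)) (hφ : DifferentiableAt ℝ φ ξ) :
    diverg (fun ζ => φ ζ • ζ) ξ = fderiv ℝ φ ξ ξ + (d : ℝ) * φ ξ := by
  have hD : HasFDerivAt (fun ζ => φ ζ • ζ)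
      (φ ξ • ContinuousLinearMap.id ℝ (EuclideanSpace ℝ (Fin d))
        + (fderiv ℝ φ ξ).smulRight ξ) ξ := hφ.hasFDerivAt.smul (hasFDerivAt_id ξ)
  rw [diverg, hD.fderiv]
  simp only [ContinuousLinearMap.add_apply, ContinuousLinearMap.smul_apply,
    ContinuousLinearMap.id_apply, ContinuousLinearMap.smulRight_apply,
    PiLp.add_apply, PiLp.smul_apply, smul_eq_mul, EuclideanSpace.single_apply,
    if_pos rfl]
  rw [Finset.sum_add_distrib]
  rw [clm_apply_sum (fderiv ℝ φ ξ) ξ]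
  simp [mul_comm, add_comm, Finset.sum_ite_eq]

set_option maxHeartbeats 2000000 in
/-- The rescaling velocity method: if `f(t,x,v) = ω(t,x)^{-d} g(t,x,v/ω(t,x))` solves the
kinetic equation `∂f/∂t + v·∇_x f = S`, then `g` solves the rescaled conservative equation
`∂g/∂t + div_x(ω ξ g) - div_ξ[((1/ω)(∂ω/∂t) ξ + (ξ⊗ξ)∇_x ω) g] = ω^d S(t,x,ωξ)`. -/
theorem rescaled_conservative_equation
    (d : ℕ) (hd : 1 ≤ d)
    (Ω : Set (EuclideanSpace ℝ (Fin d))) (hΩ : IsOpen Ω)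
    (ω : ℝ → EuclideanSpace ℝ (Fin d) → ℝ)
    (hωpos : ∀ t, 0 ≤ t → ∀ x ∈ Ω, 0 < ω t x)
    (hω : ContDiff ℝ 1 (fun p : ℝ × EuclideanSpace ℝ (Fin d) => ω p.1 p.2))
    (g : ℝ → EuclideanSpace ℝ (Fin d) → EuclideanSpace ℝ (Fin d) → ℝ)
    (hg : ContDiff ℝ 1
      (fun p : ℝ × EuclideanSpace ℝ (Fin d) × EuclideanSpace ℝ (Fin d) => g p.1 p.2.1 p.2.2))
    (f S : ℝ → EuclideanSpace ℝ (Fin d) → EuclideanSpace ℝ (Fin d) → ℝ)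
    (hf : ∀ t x v, f t x v = (ω t x ^ d)⁻¹ * g t x ((ω t x)⁻¹ • v))
    (hkin : ∀ t, 0 ≤ t → ∀ x ∈ Ω, ∀ v : EuclideanSpace ℝ (Fin d),
      deriv (fun s => f s x v) t + fderiv ℝ (fun y => f t y v) x v = S t x v) :
    ∀ t, 0 ≤ t → ∀ x ∈ Ω, ∀ ξ : EuclideanSpace ℝ (Fin d),
      deriv (fun s => g s x ξ) t
        + diverg (fun y => (ω t y * g t y ξ) • ξ) x
        - diverg (fun ζ =>
            (((ω t x)⁻¹ * deriv (fun s => ω s x) t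
                + fderiv ℝ (fun y => ω t y) x ζ) * g t x ζ) • ζ) ξ
      = ω t x ^ d * S t x (ω t x • ξ) := by
  intro t ht x hx ξ
  have hw0 : ω t x ≠ 0 := (hωpos t ht x hx).ne'
  -- joint derivatives
  set DW := fderiv ℝ (fun p : ℝ × EuclideanSpace ℝ (Fin d) => ω p.1 p.2) (t, x) with hDWdef
  have hWf : HasFDerivAt (fun p : ℝ × EuclideanSpace ℝ (Fin d) => ω p.1 p.2) DW (t, x) :=
    ((hω.differentiable one_ne_zero) (t, x)).hasFDerivAt
  set DG := fderiv ℝ (fun p : ℝ × EuclideanSpace ℝ (Fin d) × EuclideanSpace ℝ (Fin d) => g p.1 p.2.1 p.2.2) (t, x, ξ) with hDGdef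
  have hGf : HasFDerivAt (fun p : ℝ × EuclideanSpace ℝ (Fin d) × EuclideanSpace ℝ (Fin d) => g p.1 p.2.1 p.2.2) DG (t, x, ξ) :=
    ((hg.differentiable one_ne_zero) (t, x, ξ)).hasFDerivAt
  -- ω partials
  have hwt : HasDerivAt (fun s => ω s x) (DW (1, 0)) t := by
    have h1 : HasDerivAt (fun s : ℝ => (s, x)) ((1 : ℝ), (0 : EuclideanSpace ℝ (Fin d))) t :=
      (hasDerivAt_id t).prodMk (hasDerivAt_const t x)
    exact hWf.comp_hasDerivAt t h1
  have hjx : HasFDerivAt (fun y : EuclideanSpace ℝ (Fin d) => ((t : ℝ), y))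
      ((0 : EuclideanSpace ℝ (Fin d) →L[ℝ] ℝ).prod (ContinuousLinearMap.id ℝ (EuclideanSpace ℝ (Fin d)))) x :=
    (hasFDerivAt_const t x).prodMk (hasFDerivAt_id x)
  have hLx : HasFDerivAt (fun y => ω t y)
      (DW.comp ((0 : EuclideanSpace ℝ (Fin d) →L[ℝ] ℝ).prod (ContinuousLinearMap.id ℝ (EuclideanSpace ℝ (Fin d))))) x :=
    hWf.comp x hjx
  set L := DW.comp ((0 : EuclideanSpace ℝ (Fin d) →L[ℝ] ℝ).prod (ContinuousLinearMap.id ℝ (EuclideanSpace ℝ (Fin d)))) with hLdef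
  have hLval : ∀ u : EuclideanSpace ℝ (Fin d), L u = DW (0, u) := by
    intro u
    simp [hLdef]
  -- g partials
  have hgt : HasDerivAt (fun s => g s x ξ) (DG (1, 0, 0)) t := by
    have h1 : HasDerivAt (fun s : ℝ => (s, x, ξ)) ((1 : ℝ), (0 : EuclideanSpace ℝ (Fin d)), (0 : EuclideanSpace ℝ (Fin d))) t :=
      (hasDerivAt_id t).prodMk ((hasDerivAt_const t x).prodMk (hasDerivAt_const t ξ))
    exact hGf.comp_hasDerivAt t h1
  have hjx2 : HasFDerivAt (fun y : EuclideanSpace ℝ (Fin d) => ((t : ℝ), y, ξ))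
      ((0 : EuclideanSpace ℝ (Fin d) →L[ℝ] ℝ).prod ((ContinuousLinearMap.id ℝ (EuclideanSpace ℝ (Fin d))).prod (0 : EuclideanSpace ℝ (Fin d) →L[ℝ] EuclideanSpace ℝ (Fin d)))) x :=
    (hasFDerivAt_const t x).prodMk ((hasFDerivAt_id x).prodMk (hasFDerivAt_const ξ x))
  have hgx : HasFDerivAt (fun y => g t y ξ)
      (DG.comp ((0 : EuclideanSpace ℝ (Fin d) →L[ℝ] ℝ).prod ((ContinuousLinearMap.id ℝ (EuclideanSpace ℝ (Fin d))).prod (0 : EuclideanSpace ℝ (Fin d) →L[ℝ] EuclideanSpace ℝ (Fin d))))) x :=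
    HasFDerivAt.comp (g := fun p : ℝ × EuclideanSpace ℝ (Fin d) × EuclideanSpace ℝ (Fin d) => g p.1 p.2.1 p.2.2) x hGf hjx2
  have hjξ : HasFDerivAt (fun ζ : EuclideanSpace ℝ (Fin d) => ((t : ℝ), x, ζ))
      ((0 : EuclideanSpace ℝ (Fin d) →L[ℝ] ℝ).prod ((0 : EuclideanSpace ℝ (Fin d) →L[ℝ] EuclideanSpace ℝ (Fin d)).prod (ContinuousLinearMap.id ℝ (EuclideanSpace ℝ (Fin d))))) ξ :=
    (hasFDerivAt_const t ξ).prodMk ((hasFDerivAt_const x ξ).prodMk (hasFDerivAt_id ξ))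
  have hgξ : HasFDerivAt (fun ζ => g t x ζ)
      (DG.comp ((0 : EuclideanSpace ℝ (Fin d) →L[ℝ] ℝ).prod ((0 : EuclideanSpace ℝ (Fin d) →L[ℝ] EuclideanSpace ℝ (Fin d)).prod (ContinuousLinearMap.id ℝ (EuclideanSpace ℝ (Fin d)))))) ξ :=
    HasFDerivAt.comp (g := fun p : ℝ × EuclideanSpace ℝ (Fin d) × EuclideanSpace ℝ (Fin d) => g p.1 p.2.1 p.2.2) ξ hGf hjξ
  -- abbreviations
  set w := ω t x with hwdef
  set v := w • ξ with hvdef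
  have hξv : (ω t x)⁻¹ • v = ξ := by
    rw [hvdef, smul_smul, ← hwdef, inv_mul_cancel₀ hw0, one_smul]
  -- joint derivative of (s,y) ↦ f s y v
  have hpowinv : HasDerivAt (fun r : ℝ => (r ^ d)⁻¹)
      (-((d : ℝ) * w ^ (d - 1)) / (w ^ d) ^ 2) w :=
    (hasDerivAt_pow d w).inv (pow_ne_zero d hw0)
  have hcf : HasFDerivAt (fun p : ℝ × EuclideanSpace ℝ (Fin d) => (ω p.1 p.2 ^ d)⁻¹)
      ((-((d : ℝ) * w ^ (d - 1)) / (w ^ d) ^ 2) • DW) (t, x) :=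
    HasDerivAt.comp_hasFDerivAt (f := fun p : ℝ × EuclideanSpace ℝ (Fin d) => ω p.1 p.2) (t, x) hpowinv hWf
  have hscinv : HasFDerivAt (fun p : ℝ × EuclideanSpace ℝ (Fin d) => (ω p.1 p.2)⁻¹)
      ((-(w ^ 2)⁻¹) • DW) (t, x) := by
    have h := (hasDerivAt_inv hw0).comp_hasFDerivAt (t, x) hWf
    exact h
  have hsv : HasFDerivAt (fun p : ℝ × EuclideanSpace ℝ (Fin d) => (ω p.1 p.2)⁻¹ • v)
      (((-(w ^ 2)⁻¹) • DW).smulRight v) (t, x) := hscinv.smul_const v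
  have hΦ : HasFDerivAt (fun p : ℝ × EuclideanSpace ℝ (Fin d) => (p.1, p.2, (ω p.1 p.2)⁻¹ • v))
      ((ContinuousLinearMap.fst ℝ ℝ (EuclideanSpace ℝ (Fin d))).prod
        ((ContinuousLinearMap.snd ℝ ℝ (EuclideanSpace ℝ (Fin d))).prod (((-(w ^ 2)⁻¹) • DW).smulRight v))) (t, x) :=
    hasFDerivAt_fst.prodMk (hasFDerivAt_snd.prodMk hsv)
  have hGf2 : HasFDerivAt (fun p : ℝ × EuclideanSpace ℝ (Fin d) × EuclideanSpace ℝ (Fin d) => g p.1 p.2.1 p.2.2) DG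
      (t, x, (ω t x)⁻¹ • v) := by rw [hξv]; exact hGf
  have hGΦ : HasFDerivAt (fun p : ℝ × EuclideanSpace ℝ (Fin d) => g p.1 p.2 ((ω p.1 p.2)⁻¹ • v))
      (DG.comp ((ContinuousLinearMap.fst ℝ ℝ (EuclideanSpace ℝ (Fin d))).prod
        ((ContinuousLinearMap.snd ℝ ℝ (EuclideanSpace ℝ (Fin d))).prod (((-(w ^ 2)⁻¹) • DW).smulRight v)))) (t, x) :=
    HasFDerivAt.comp (g := fun p : ℝ × EuclideanSpace ℝ (Fin d) × EuclideanSpace ℝ (Fin d) => g p.1 p.2.1 p.2.2) (t, x) hGf2 hΦ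
  set DΦ := (ContinuousLinearMap.fst ℝ ℝ (EuclideanSpace ℝ (Fin d))).prod
      ((ContinuousLinearMap.snd ℝ ℝ (EuclideanSpace ℝ (Fin d))).prod (((-(w ^ 2)⁻¹) • DW).smulRight v)) with hDΦdef
  set DF := (w ^ d)⁻¹ • (DG.comp DΦ)
      + (g t x ξ) • ((-((d : ℝ) * w ^ (d - 1)) / (w ^ d) ^ 2) • DW) with hDFdef
  have hF : HasFDerivAt (fun p : ℝ × EuclideanSpace ℝ (Fin d) => f p.1 p.2 v) DF (t, x) := by
    have h := hcf.mul hGΦ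
    rw [hξv] at h
    have hfun : (fun p : ℝ × EuclideanSpace ℝ (Fin d) => f p.1 p.2 v)
        = fun p : ℝ × EuclideanSpace ℝ (Fin d) => (ω p.1 p.2 ^ d)⁻¹ * g p.1 p.2 ((ω p.1 p.2)⁻¹ • v) := by
      funext p; exact hf p.1 p.2 v
    rw [hfun, hDFdef]
    exact h
  have hft : HasDerivAt (fun s => f s x v) (DF (1, 0)) t := by
    have h1 : HasDerivAt (fun s : ℝ => (s, x)) ((1 : ℝ), (0 : EuclideanSpace ℝ (Fin d))) t :=
      (hasDerivAt_id t).prodMk (hasDerivAt_const t x)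
    exact hF.comp_hasDerivAt t h1
  have hfx : HasFDerivAt (fun y => f t y v)
      (DF.comp ((0 : EuclideanSpace ℝ (Fin d) →L[ℝ] ℝ).prod (ContinuousLinearMap.id ℝ (EuclideanSpace ℝ (Fin d))))) x :=
    hF.comp x hjx
  have hk := hkin t ht x hx v
  rw [hft.deriv, hfx.fderiv] at hk
  -- name scalar quantities
  set p := DG ((1 : ℝ), (0 : EuclideanSpace ℝ (Fin d)), (0 : EuclideanSpace ℝ (Fin d))) with hpdef
  set q := DG ((0 : ℝ), ξ, (0 : EuclideanSpace ℝ (Fin d))) with hqdef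
  set r := DG ((0 : ℝ), (0 : EuclideanSpace ℝ (Fin d)), ξ) with hrdef
  set a := DW ((1 : ℝ), (0 : EuclideanSpace ℝ (Fin d))) with hadef
  set b := DW ((0 : ℝ), ξ) with hbdef
  have hDGlin : ∀ α β γ : ℝ, DG (α, β • ξ, γ • ξ) = α * p + β * q + γ * r := by
    intro α β γ
    have hsplit : ((α, β • ξ, γ • ξ) : ℝ × EuclideanSpace ℝ (Fin d) × EuclideanSpace ℝ (Fin d))
        = α • ((1 : ℝ), (0 : EuclideanSpace ℝ (Fin d)), (0 : EuclideanSpace ℝ (Fin d))) + β • ((0 : ℝ), ξ, (0 : EuclideanSpace ℝ (Fin d)))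
          + γ • ((0 : ℝ), (0 : EuclideanSpace ℝ (Fin d)), ξ) := by
      simp [Prod.ext_iff]
    rw [hsplit, map_add, map_add, map_smul, map_smul, map_smul, hpdef, hqdef, hrdef]
    simp [smul_eq_mul]
  have hDWv : DW ((0 : ℝ), v) = w * b := by
    have : ((0 : ℝ), v) = w • (((0 : ℝ), ξ) : ℝ × EuclideanSpace ℝ (Fin d)) := by
      simp [hvdef, Prod.ext_iff]
    rw [this, map_smul, smul_eq_mul, hbdef]
  -- compute DF (1,0) and (DF.comp J) v
  have hDF1 : DF (1, 0) = (w ^ d)⁻¹ * (p + (-(w ^ 2)⁻¹ * a * w) * r)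
      + g t x ξ * ((-((d : ℝ) * w ^ (d - 1)) / (w ^ d) ^ 2) * a) := by
    rw [hDFdef]
    simp only [ContinuousLinearMap.add_apply, ContinuousLinearMap.smul_apply,
      ContinuousLinearMap.coe_comp', Function.comp_apply, hDΦdef,
      ContinuousLinearMap.prod_apply, ContinuousLinearMap.coe_fst',
      ContinuousLinearMap.coe_snd', ContinuousLinearMap.smulRight_apply,
      smul_eq_mul]
    rw [← hadef]
    rw [show (-(w ^ 2)⁻¹ * a) • v = (-(w ^ 2)⁻¹ * a * w) • ξ from by
      rw [hvdef, smul_smul]]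
    have e2 := hDGlin 1 0 (-(w ^ 2)⁻¹ * a * w)
    simp only [zero_smul, one_mul, zero_mul, add_zero, zero_add] at e2
    rw [e2]
  have hDFv : (DF.comp ((0 : EuclideanSpace ℝ (Fin d) →L[ℝ] ℝ).prod (ContinuousLinearMap.id ℝ (EuclideanSpace ℝ (Fin d))))) v
      = (w ^ d)⁻¹ * (w * q + (-(w ^ 2)⁻¹ * (w * b) * w) * r)
      + g t x ξ * ((-((d : ℝ) * w ^ (d - 1)) / (w ^ d) ^ 2) * (w * b)) := by
    rw [hDFdef]
    simp only [ContinuousLinearMap.add_apply, ContinuousLinearMap.smul_apply,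
      ContinuousLinearMap.coe_comp', Function.comp_apply, hDΦdef,
      ContinuousLinearMap.prod_apply, ContinuousLinearMap.coe_fst',
      ContinuousLinearMap.coe_snd', ContinuousLinearMap.smulRight_apply,
      ContinuousLinearMap.zero_apply, ContinuousLinearMap.id_apply,
      smul_eq_mul]
    rw [hDWv]
    rw [show (-(w ^ 2)⁻¹ * (w * b)) • v = (-(w ^ 2)⁻¹ * (w * b) * w) • ξ from by
      rw [hvdef, smul_smul]]
    have e2 := hDGlin 0 w (-(w ^ 2)⁻¹ * (w * b) * w)
    simp only [zero_smul, zero_mul, zero_add] at e2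
    rw [show ((0 : ℝ), v, (-(w ^ 2)⁻¹ * (w * b) * w) • ξ)
        = ((0 : ℝ), w • ξ, (-(w ^ 2)⁻¹ * (w * b) * w) • ξ) from by rw [hvdef]]
    rw [e2]
  rw [hDF1, hDFv] at hk
  -- now rewrite the goal
  rw [hgt.deriv]
  rw [diverg_smul_const (fun y => ω t y * g t y ξ) ξ x
    (hLx.differentiableAt.mul hgx.differentiableAt)]
  have hmulx : HasFDerivAt (fun y => ω t y * g t y ξ)
      (w • (DG.comp ((0 : EuclideanSpace ℝ (Fin d) →L[ℝ] ℝ).prod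
          ((ContinuousLinearMap.id ℝ (EuclideanSpace ℝ (Fin d))).prod (0 : EuclideanSpace ℝ (Fin d) →L[ℝ] EuclideanSpace ℝ (Fin d)))))
        + (g t x ξ) • L) x := hLx.mul hgx
  rw [hmulx.fderiv]
  -- divergence in ξ
  have hφdiff : DifferentiableAt ℝ
      (fun ζ => ((ω t x)⁻¹ * deriv (fun s => ω s x) t
        + fderiv ℝ (fun y => ω t y) x ζ) * g t x ζ) ξ := by
    apply DifferentiableAt.mul
    · exact (differentiableAt_const _).add (fderiv ℝ (fun y => ω t y) x).differentiableAt
    · exact hgξ.differentiableAt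
  rw [diverg_smul_id _ ξ hφdiff]
  have haff : HasFDerivAt (fun ζ : EuclideanSpace ℝ (Fin d) => (ω t x)⁻¹ * deriv (fun s => ω s x) t
      + fderiv ℝ (fun y => ω t y) x ζ) (fderiv ℝ (fun y => ω t y) x) ξ := by
    have h := (hasFDerivAt_const ((ω t x)⁻¹ * deriv (fun s => ω s x) t) ξ).add
      (fderiv ℝ (fun y => ω t y) x).hasFDerivAt
    simp only [zero_add] at h
    exact h
  have hmulξ : HasFDerivAt
      (fun ζ => ((ω t x)⁻¹ * deriv (fun s => ω s x) t
        + fderiv ℝ (fun y => ω t y) x ζ) * g t x ζ)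
      (((ω t x)⁻¹ * deriv (fun s => ω s x) t + fderiv ℝ (fun y => ω t y) x ξ)
          • (DG.comp ((0 : EuclideanSpace ℝ (Fin d) →L[ℝ] ℝ).prod
            ((0 : EuclideanSpace ℝ (Fin d) →L[ℝ] EuclideanSpace ℝ (Fin d)).prod (ContinuousLinearMap.id ℝ (EuclideanSpace ℝ (Fin d))))))
        + (g t x ξ) • fderiv ℝ (fun y => ω t y) x) ξ := haff.mul hgξ
  rw [hmulξ.fderiv]
  rw [hLx.fderiv, hwt.deriv]
  -- clean up all CLM applications
  simp only [ContinuousLinearMap.add_apply, ContinuousLinearMap.smul_apply,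
    ContinuousLinearMap.coe_comp', Function.comp_apply,
    ContinuousLinearMap.prod_apply, ContinuousLinearMap.zero_apply,
    ContinuousLinearMap.id_apply, smul_eq_mul]
  rw [hLval ξ]
  rw [show DW ((0 : ℝ), ξ) = b from hbdef.symm]
  rw [← hwdef, ← hk]
  have hwd : w ^ d = w ^ (d - 1) * w := by
    rw [← pow_succ]
    congr 1
    omega
  have hX0 : w ^ (d - 1) ≠ 0 := pow_ne_zero _ hw0
  rw [hwd]
  field_simp
  ring
end

section
/- Let d ≥ 1, e ∈ [0,1], let b : [−1,1] → ℝ₊ be bounded measurable, and let f : ℝ^d → ℝ₊ be measurable such that ∭ |v−v_*| (1+|v|²+|v_*|²) f(v) f(v_*) b(û·σ) dσ dv dv_* < ∞. Then the weak form of the granular gases operator against ψ(v) = |v|² equals ⟨Q_I(f,f), |v|²⟩ = −((1−e²)/4) ∭_{ℝ^d×ℝ^d×S^{d−1}} |v−v_*| |(v−v_*)·σ|² f(v) f(v_*) b(û·σ) dσ dv dv_*, which is ≤ 0: the granular gases collision operator dissipates kinetic energy. -/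
open MeasureTheory
open scoped RealInnerProductSpace

/-- The integrand of the weak form of the granular gases (inelastic Boltzmann) collision
operator with hard-sphere kernel and constant restitution coefficient `e`. -/
noncomputable def inelasticKernel (d : ℕ) (e : ℝ) (b : ℝ → ℝ)
    (f ψ : EuclideanSpace ℝ (Fin d) → ℝ)
    (p : (EuclideanSpace ℝ (Fin d) × EuclideanSpace ℝ (Fin d)) ×
      Metric.sphere (0 : EuclideanSpace ℝ (Fin d)) 1) : ℝ :=
  ‖p.1.1 - p.1.2‖ * f p.1.1 * f p.1.2 *
    (ψ (p.1.1 - (((1 + e) / 2) * ⟪p.1.1 - p.1.2, (p.2 : EuclideanSpace ℝ (Fin d))⟫) •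
          (p.2 : EuclideanSpace ℝ (Fin d))) +
      ψ (p.1.2 + (((1 + e) / 2) * ⟪p.1.1 - p.1.2, (p.2 : EuclideanSpace ℝ (Fin d))⟫) •
          (p.2 : EuclideanSpace ℝ (Fin d))) -
      ψ p.1.1 - ψ p.1.2) *
    b ⟪‖p.1.1 - p.1.2‖⁻¹ • (p.1.1 - p.1.2), (p.2 : EuclideanSpace ℝ (Fin d))⟫

/-- The weak form `⟨Q_I(f,f), ψ⟩` of the granular gases collision operator, the angular
integration being with respect to the surface measure on the unit sphere. -/
noncomputable def weakQI (d : ℕ) (e : ℝ) (b : ℝ → ℝ)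
    (f ψ : EuclideanSpace ℝ (Fin d) → ℝ) : ℝ :=
  (1 / 2) * ∫ p, inelasticKernel d e b f ψ p ∂((volume.prod volume).prod volume.toSphere)

/-- The granular gases collision operator dissipates kinetic energy:
`⟨Q_I(f,f), |v|²⟩ = -((1-e²)/4) ∭ |v-v_*| |(v-v_*)·σ|² f f_* b dσ dv dv_* ≤ 0`. -/
theorem weakQI_energy_dissipation
    (d : ℕ) (hd : 1 ≤ d) (e : ℝ) (he : e ∈ Set.Icc (0 : ℝ) 1)
    (b : ℝ → ℝ) (hb0 : ∀ s, 0 ≤ b s) (hbm : Measurable b) (hbb : ∃ M, ∀ s, b s ≤ M)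
    (f : EuclideanSpace ℝ (Fin d) → ℝ) (hfm : Measurable f) (hf0 : ∀ v, 0 ≤ f v)
    (hInt : Integrable
      (fun p : (EuclideanSpace ℝ (Fin d) × EuclideanSpace ℝ (Fin d)) ×
          Metric.sphere (0 : EuclideanSpace ℝ (Fin d)) 1 =>
        ‖p.1.1 - p.1.2‖ * (1 + ‖p.1.1‖ ^ 2 + ‖p.1.2‖ ^ 2) * f p.1.1 * f p.1.2 *
          b ⟪‖p.1.1 - p.1.2‖⁻¹ • (p.1.1 - p.1.2), (p.2 : EuclideanSpace ℝ (Fin d))⟫)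
      ((volume.prod volume).prod volume.toSphere)) :
    weakQI d e b f (fun v => ‖v‖ ^ 2) =
      -((1 - e ^ 2) / 4) *
        ∫ p : (EuclideanSpace ℝ (Fin d) × EuclideanSpace ℝ (Fin d)) ×
            Metric.sphere (0 : EuclideanSpace ℝ (Fin d)) 1,
          ‖p.1.1 - p.1.2‖ * |⟪p.1.1 - p.1.2, (p.2 : EuclideanSpace ℝ (Fin d))⟫| ^ 2 *
            f p.1.1 * f p.1.2 *
            b ⟪‖p.1.1 - p.1.2‖⁻¹ • (p.1.1 - p.1.2), (p.2 : EuclideanSpace ℝ (Fin d))⟫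
          ∂((volume.prod volume).prod volume.toSphere) ∧
      weakQI d e b f (fun v => ‖v‖ ^ 2) ≤ 0 := by
  obtain ⟨he0, he1⟩ := he
  set g : (EuclideanSpace ℝ (Fin d) × EuclideanSpace ℝ (Fin d)) ×
      Metric.sphere (0 : EuclideanSpace ℝ (Fin d)) 1 → ℝ := fun p =>
    ‖p.1.1 - p.1.2‖ * |⟪p.1.1 - p.1.2, (p.2 : EuclideanSpace ℝ (Fin d))⟫| ^ 2 *
      f p.1.1 * f p.1.2 *
      b ⟪‖p.1.1 - p.1.2‖⁻¹ • (p.1.1 - p.1.2), (p.2 : EuclideanSpace ℝ (Fin d))⟫ with hg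
  have key : ∀ p, inelasticKernel d e b f (fun v => ‖v‖ ^ 2) p
      = (-(1 - e ^ 2) / 2) * g p := by
    rintro ⟨⟨v, w⟩, σ⟩
    have hσ1 : ‖(σ : EuclideanSpace ℝ (Fin d))‖ = 1 := by
      simpa using mem_sphere_zero_iff_norm.mp σ.2
    simp only [inelasticKernel, hg]
    have h1 := norm_sub_sq_real v ((((1 + e) / 2) * ⟪v - w, (σ : EuclideanSpace ℝ (Fin d))⟫) •
      (σ : EuclideanSpace ℝ (Fin d)))
    have h2 := norm_add_sq_real w ((((1 + e) / 2) * ⟪v - w, (σ : EuclideanSpace ℝ (Fin d))⟫) •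
      (σ : EuclideanSpace ℝ (Fin d)))
    have h3 : ⟪v - w, (σ : EuclideanSpace ℝ (Fin d))⟫
        = ⟪v, (σ : EuclideanSpace ℝ (Fin d))⟫ - ⟪w, (σ : EuclideanSpace ℝ (Fin d))⟫ :=
      inner_sub_left _ _ _
    simp only [real_inner_smul_right, norm_smul, mul_pow, Real.norm_eq_abs, sq_abs, hσ1,
      one_pow, mul_one] at h1 h2 ⊢
    rw [h1, h2, h3]
    ring
  have hI : (0 : ℝ) ≤ ∫ p, g p ∂((volume.prod volume).prod volume.toSphere) := by
    refine integral_nonneg fun p => ?_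
    have := hf0 p.1.1
    have := hf0 p.1.2
    have := hb0 ⟪‖p.1.1 - p.1.2‖⁻¹ • (p.1.1 - p.1.2), (p.2 : EuclideanSpace ℝ (Fin d))⟫
    have : (0:ℝ) ≤ ‖p.1.1 - p.1.2‖ := norm_nonneg _
    positivity
  have hw : weakQI d e b f (fun v => ‖v‖ ^ 2)
      = -((1 - e ^ 2) / 4) * ∫ p, g p ∂((volume.prod volume).prod volume.toSphere) := by
    unfold weakQI
    rw [integral_congr_ae (Filter.Eventually.of_forall key), integral_const_mul]
    ring
  refine ⟨hw, ?_⟩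
  rw [hw]
  have he2 : e ^ 2 ≤ 1 := by nlinarith
  nlinarith [mul_nonneg (by linarith : (0:ℝ) ≤ (1 - e ^ 2) / 4) hI]
end

section
/- Let d ≥ 1, let n ∈ ℝ^d with |n| = 1, let T_w > 0 and u_w ∈ ℝ^d with u_w·n = 0, and let M(v) = (2π T_w)^{−d/2} exp(−|v−u_w|²/(2T_w)). Let f : ℝ^d → ℝ₊ be measurable with ∫ f(v)(1+|log(f(v)/M(v))|)|v·n| dv < ∞ and ∫_{v·n>0} f(v)(v·n) dv > 0. Suppose f satisfies the purely diffusive boundary condition (accommodation coefficient α = 1): f(v) = μ M(v) for all v with v·n < 0, where μ is defined by ∫_{v·n>0} f(v)(v·n) dv = −μ ∫_{v·n<0} M(v)(v·n) dv. Then the boundary relative entropy flux is nonnegative: ∫_{ℝ^d} f(v) log( f(v)/M(v) ) (v·n) dv ≥ 0. This is the pointwise boundary inequality behind the dissipation of the entropy functional ∫ f log f dv dx under Maxwell boundary conditions. -/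
open MeasureTheory Real
open scoped RealInnerProductSpace

lemma tangent_ineq {x a : ℝ} (hx : 0 ≤ x) (ha : 0 < a) : x - a ≤ x * Real.log (x / a) := by
  rcases eq_or_lt_of_le hx with h | h
  · simp [← h]; linarith
  · have h1 : 0 < a / x := div_pos ha h
    have h2 := Real.log_le_sub_one_of_pos h1
    have h3 : Real.log (a / x) = - Real.log (x / a) := by
      rw [← Real.log_inv]; congr 1; field_simp
    rw [h3] at h2
    have h4 := mul_le_mul_of_nonneg_left h2 h.le
    have h5 : x * (a / x) = a := by field_simp
    nlinarith

lemma gauss_lin_integrable (d : ℕ) {b : ℝ} (hb : 0 < b) :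
    Integrable (fun v : EuclideanSpace ℝ (Fin d) => ‖v‖ * rexp (-b * ‖v‖ ^ 2)) := by
  have hint : Integrable (fun v : EuclideanSpace ℝ (Fin d) => rexp (-(b/2) * ‖v‖ ^ 2)) := by
    have h := (GaussianFourier.integrable_cexp_neg_mul_sq_norm_add
      (V := EuclideanSpace ℝ (Fin d)) (b := ((b/2 : ℝ) : ℂ)) (by simpa using half_pos hb)
      0 (0 : EuclideanSpace ℝ (Fin d))).norm
    refine h.congr (ae_of_all _ fun v => ?_)
    simp [Complex.norm_exp, ← Complex.ofReal_pow]
  refine (hint.const_mul (1 / Real.sqrt b)).mono ?_ (ae_of_all _ fun v => ?_)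
  · apply Continuous.aestronglyMeasurable
    fun_prop
  · set x := ‖v‖ with hx
    have hx0 : 0 ≤ x := norm_nonneg v
    have hsb : 0 < Real.sqrt b := Real.sqrt_pos.mpr hb
    have key : x * rexp (-(b/2) * x ^ 2) ≤ 1 / Real.sqrt b := by
      have hsq : (x * rexp (-(b/2) * x ^ 2)) ^ 2 ≤ (1 / Real.sqrt b) ^ 2 := by
        have e1 : (rexp (-(b/2) * x ^ 2)) ^ 2 = rexp (-b * x ^ 2) := by
          rw [← Real.exp_nat_mul]; ring_nf
        have e2 : (1 / Real.sqrt b) ^ 2 = 1 / b := by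
          rw [div_pow, one_pow, Real.sq_sqrt hb.le]
        rw [mul_pow, e1, e2]
        have h1 : b * x ^ 2 ≤ rexp (b * x ^ 2) := by
          linarith [Real.add_one_le_exp (b * x ^ 2)]
        have h2 : rexp (-b * x ^ 2) * rexp (b * x ^ 2) = 1 := by
          rw [← Real.exp_add]; ring_nf; exact Real.exp_zero
        have h3 : 0 < rexp (-b * x ^ 2) := Real.exp_pos _
        have h4 : rexp (-b * x ^ 2) * (b * x ^ 2) ≤ 1 := by
          calc rexp (-b * x ^ 2) * (b * x ^ 2)
              ≤ rexp (-b * x ^ 2) * rexp (b * x ^ 2) :=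
                mul_le_mul_of_nonneg_left h1 h3.le
            _ = 1 := h2
        rw [le_div_iff₀ hb]
        nlinarith [h4]
      have := Real.sqrt_le_sqrt hsq
      rwa [Real.sqrt_sq (by positivity), Real.sqrt_sq (by positivity)] at this
    have hsplit : rexp (-b * x ^ 2) = rexp (-(b/2) * x ^ 2) * rexp (-(b/2) * x ^ 2) := by
      rw [← Real.exp_add]; ring_nf
    rw [Real.norm_eq_abs, Real.norm_eq_abs, abs_of_nonneg (by positivity),
      abs_of_nonneg (by positivity), hsplit, ← mul_assoc]
    exact mul_le_mul_of_nonneg_right key (Real.exp_nonneg _)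

set_option maxHeartbeats 1000000 in
/-- Purely diffusive Maxwell boundary conditions (accommodation coefficient `α = 1`)
dissipate entropy: the boundary relative entropy flux `∫ f log(f/M) (v·n) dv` is
nonnegative. -/

theorem diffusive_boundary_entropy_flux
    (d : ℕ) (hd : 1 ≤ d)
    (n : EuclideanSpace ℝ (Fin d)) (hn : ‖n‖ = 1)
    (Tw : ℝ) (hTw : 0 < Tw)
    (uw : EuclideanSpace ℝ (Fin d)) (huw : ⟪uw, n⟫ = 0)
    (M : EuclideanSpace ℝ (Fin d) → ℝ)
    (hM : ∀ v, M v = (2 * π * Tw) ^ (-(d : ℝ) / 2) * Real.exp (-‖v - uw‖ ^ 2 / (2 * Tw)))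
    (f : EuclideanSpace ℝ (Fin d) → ℝ) (hf0 : ∀ v, 0 ≤ f v) (hfm : Measurable f)
    (hfint : Integrable (fun v => f v * (1 + |Real.log (f v / M v)|) * |⟪v, n⟫|))
    (hflux : 0 < ∫ v in {v : EuclideanSpace ℝ (Fin d) | 0 < ⟪v, n⟫}, f v * ⟪v, n⟫)
    (μ : ℝ)
    (hbal : (∫ v in {v : EuclideanSpace ℝ (Fin d) | 0 < ⟪v, n⟫}, f v * ⟪v, n⟫) =
      -μ * ∫ v in {v : EuclideanSpace ℝ (Fin d) | ⟪v, n⟫ < 0}, M v * ⟪v, n⟫)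
    (hbc : ∀ v : EuclideanSpace ℝ (Fin d), ⟪v, n⟫ < 0 → f v = μ * M v) :
    0 ≤ ∫ v : EuclideanSpace ℝ (Fin d), f v * Real.log (f v / M v) * ⟪v, n⟫ := by
  set Sp : Set (EuclideanSpace ℝ (Fin d)) := {v | 0 < ⟪v, n⟫} with hSpdef
  set Sm : Set (EuclideanSpace ℝ (Fin d)) := {v | ⟪v, n⟫ < 0} with hSmdef
  set S0 : Set (EuclideanSpace ℝ (Fin d)) := {v | ⟪v, n⟫ = 0} with hS0def
  have hcont : Continuous fun v : EuclideanSpace ℝ (Fin d) => ⟪v, n⟫ := continuous_id.inner continuous_const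
  have hSpm : MeasurableSet Sp := measurableSet_lt measurable_const hcont.measurable
  have hSmm : MeasurableSet Sm := measurableSet_lt hcont.measurable measurable_const
  have hS0m : MeasurableSet S0 := hcont.measurable (measurableSet_singleton 0)
  have hc2 : (0:ℝ) < 2 * π * Tw := by positivity
  have hMpos : ∀ v, 0 < M v := fun v => by rw [hM v]; positivity
  have hMcont : Continuous M := by
    have : M = fun v => (2 * π * Tw) ^ (-(d : ℝ) / 2) *
        Real.exp (-‖v - uw‖ ^ 2 / (2 * Tw)) := funext hM
    rw [this]; fun_prop
  -- integrability of M v * ⟪v, n⟫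
  have hb : (0:ℝ) < 1 / (2 * Tw) := by positivity
  have hMb : Integrable (fun v : EuclideanSpace ℝ (Fin d) => M v * ⟪v, n⟫) := by
    have hshift : Integrable (fun w : EuclideanSpace ℝ (Fin d) =>
        (2 * π * Tw) ^ (-(d : ℝ) / 2) * rexp (-(1/(2*Tw)) * ‖w‖ ^ 2) * ⟪w, n⟫) := by
      refine (((gauss_lin_integrable d hb).const_mul
        ((2 * π * Tw) ^ (-(d : ℝ) / 2))).mono ?_ (ae_of_all _ fun w => ?_))
      · apply Continuous.aestronglyMeasurable; fun_prop
      · have h1 : |⟪w, n⟫| ≤ ‖w‖ := by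
          have := abs_real_inner_le_norm w n
          rwa [hn, mul_one] at this
        have hcp : (0:ℝ) < (2 * π * Tw) ^ (-(d : ℝ) / 2) := by positivity
        rw [Real.norm_eq_abs, Real.norm_eq_abs, abs_mul, abs_mul,
          abs_of_nonneg hcp.le, abs_of_nonneg (Real.exp_nonneg _),
          abs_of_nonneg (by positivity : (0:ℝ) ≤ (2 * π * Tw) ^ (-(d : ℝ) / 2) *
            (‖w‖ * rexp (-(1/(2*Tw)) * ‖w‖ ^ 2)))]
        calc (2 * π * Tw) ^ (-(d : ℝ) / 2) * rexp (-(1/(2*Tw)) * ‖w‖ ^ 2) * |⟪w, n⟫|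
            ≤ (2 * π * Tw) ^ (-(d : ℝ) / 2) * rexp (-(1/(2*Tw)) * ‖w‖ ^ 2) * ‖w‖ := by
              gcongr
          _ = (2 * π * Tw) ^ (-(d : ℝ) / 2) * (‖w‖ * rexp (-(1/(2*Tw)) * ‖w‖ ^ 2)) := by ring
    have := hshift.comp_add_right (-uw)
    refine this.congr (ae_of_all _ fun v => ?_)
    show (2 * π * Tw) ^ (-(d : ℝ) / 2) * rexp (-(1/(2*Tw)) * ‖v + -uw‖ ^ 2) * ⟪v + -uw, n⟫
        = M v * ⟪v, n⟫
    rw [hM v, ← sub_eq_add_neg]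
    have e2 : ⟪v - uw, n⟫ = ⟪v, n⟫ := by rw [inner_sub_left, huw, sub_zero]
    have e3 : -(1/(2*Tw)) * ‖v - uw‖ ^ 2 = -‖v - uw‖ ^ 2 / (2 * Tw) := by ring
    rw [e2, e3]
  -- reflection
  set R := Submodule.reflection (ℝ ∙ n)ᗮ with hRdef
  have hRn : R n = -n := Submodule.reflection_orthogonalComplement_singleton_eq_neg n
  have hRuw : R uw = uw := Submodule.reflection_mem_subspace_eq_self
    (Submodule.mem_orthogonal_singleton_iff_inner_right.mpr
      (by rw [real_inner_comm]; exact huw))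
  have hRinner : ∀ v : EuclideanSpace ℝ (Fin d), ⟪R v, n⟫ = -⟪v, n⟫ := by
    intro v
    have h1 : ⟪R v, R n⟫ = ⟪v, n⟫ := R.inner_map_map v n
    rw [hRn, inner_neg_right] at h1
    linarith
  have hRM : ∀ v, M (R v) = M v := by
    intro v
    rw [hM, hM]
    congr 2
    rw [show R v - uw = R (v - uw) by rw [map_sub, hRuw], R.norm_map]
  have hmp : MeasurePreserving R := R.measurePreserving
  have hemb : MeasurableEmbedding R := R.toHomeomorph.measurableEmbedding
  have hIflip : (∫ v in Sm, M v * ⟪v, n⟫) = -∫ v in Sp, M v * ⟪v, n⟫ := by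
    have h1 := hmp.setIntegral_preimage_emb hemb (fun v => M v * ⟪v, n⟫) Sm
    have h2 : R ⁻¹' Sm = Sp := by
      ext v
      simp only [Set.mem_preimage, hSmdef, hSpdef, Set.mem_setOf_eq, hRinner v]
      constructor <;> intro hh <;> linarith
    rw [h2] at h1
    rw [← h1,
      show (∫ x in Sp, M (R x) * ⟪R x, n⟫) = ∫ x in Sp, -(M x * ⟪x, n⟫) from
        setIntegral_congr_fun hSpm fun x _ => by rw [hRM x, hRinner x]; ring,
      integral_neg]
  have hIpos : 0 < ∫ v in Sp, M v * ⟪v, n⟫ := by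
    have hnonneg : 0 ≤ᵐ[volume.restrict Sp] fun v => M v * ⟪v, n⟫ :=
      (ae_restrict_iff' hSpm).mpr (ae_of_all _ fun v hv =>
        mul_nonneg (hMpos v).le (le_of_lt hv))
    rw [setIntegral_pos_iff_support_of_nonneg_ae hnonneg hMb.integrableOn]
    have hsub : Sp ⊆ Function.support (fun v => M v * ⟪v, n⟫) ∩ Sp := fun v hv =>
      ⟨(mul_pos (hMpos v) hv).ne', hv⟩
    have hopen : IsOpen Sp := isOpen_lt continuous_const hcont
    have hne : Sp.Nonempty := ⟨n, by
      simp only [hSpdef, Set.mem_setOf_eq, real_inner_self_eq_norm_sq, hn]; norm_num⟩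
    exact lt_of_lt_of_le (hopen.measure_pos volume hne) (measure_mono hsub)
  have hmuI : μ * (∫ v in Sp, M v * ⟪v, n⟫) = ∫ v in Sp, f v * ⟪v, n⟫ := by
    rw [hbal, hIflip]; ring
  have hmupos : 0 < μ := by nlinarith [hflux, hIpos, hmuI]
  set g := fun v : EuclideanSpace ℝ (Fin d) =>
    f v * Real.log (f v / M v) * ⟪v, n⟫ with hgdef
  have hgm : AEStronglyMeasurable g volume :=
    ((hfm.mul ((hfm.div hMcont.measurable).log)).mul hcont.measurable).aestronglyMeasurable
  have hgint : Integrable g := by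
    refine hfint.mono hgm (ae_of_all _ fun v => ?_)
    show |f v * Real.log (f v / M v) * ⟪v, n⟫| ≤ ‖f v * (1 + |Real.log (f v / M v)|) * |⟪v, n⟫|‖
    rw [Real.norm_eq_abs, abs_mul, abs_mul, abs_of_nonneg (hf0 v),
      abs_of_nonneg (mul_nonneg (mul_nonneg (hf0 v)
        (by positivity)) (abs_nonneg (⟪v, n⟫ : ℝ)))]
    nlinarith [mul_nonneg (hf0 v) (abs_nonneg (⟪v, n⟫ : ℝ)),
      abs_nonneg (Real.log (f v / M v)), abs_nonneg (⟪v, n⟫ : ℝ)]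
  have hfvn : Integrable (fun v : EuclideanSpace ℝ (Fin d) => f v * ⟪v, n⟫) := by
    refine hfint.mono (hfm.mul hcont.measurable).aestronglyMeasurable
      (ae_of_all _ fun v => ?_)
    show |f v * ⟪v, n⟫| ≤ ‖f v * (1 + |Real.log (f v / M v)|) * |⟪v, n⟫|‖
    rw [Real.norm_eq_abs, abs_mul, abs_of_nonneg (hf0 v),
      abs_of_nonneg (mul_nonneg (mul_nonneg (hf0 v)
        (by positivity)) (abs_nonneg (⟪v, n⟫ : ℝ)))]
    nlinarith [mul_nonneg (mul_nonneg (hf0 v) (abs_nonneg (Real.log (f v / M v))))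
      (abs_nonneg (⟪v, n⟫ : ℝ))]
  have hcompl : Spᶜ = Sm ∪ S0 := by
    ext v
    simp only [Set.mem_compl_iff, hSpdef, hSmdef, hS0def, Set.mem_setOf_eq,
      Set.mem_union, not_lt]
    constructor
    · intro hh; rcases hh.lt_or_eq with hh' | hh'
      · exact Or.inl hh'
      · exact Or.inr hh'
    · intro hh; rcases hh with hh | hh
      · exact hh.le
      · exact hh.le
  have hdisj : Disjoint Sm S0 := by
    rw [Set.disjoint_left]
    intro v hv hv0
    exact absurd hv0 (ne_of_lt hv)
  have hzero : (∫ v in S0, g v) = 0 :=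
    setIntegral_eq_zero_of_forall_eq_zero fun v hv => by
      have hv0 : ⟪v, n⟫ = (0:ℝ) := hv
      show f v * Real.log (f v / M v) * ⟪v, n⟫ = 0
      rw [hv0, mul_zero]
  have hsplit : (∫ v, g v) = (∫ v in Sp, g v) + ∫ v in Sm, g v := by
    rw [← integral_add_compl hSpm hgint, hcompl,
      setIntegral_union hdisj hS0m hgint.integrableOn hgint.integrableOn, hzero, add_zero]
  have hneg : (∫ v in Sm, g v) = μ * Real.log μ * ∫ v in Sm, M v * ⟪v, n⟫ := by
    rw [← integral_const_mul]
    refine setIntegral_congr_fun hSmm fun v hv => ?_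
    have hv' : ⟪v, n⟫ < 0 := hv
    have hfv := hbc v hv'
    show f v * Real.log (f v / M v) * ⟪v, n⟫ = μ * Real.log μ * (M v * ⟪v, n⟫)
    rw [hfv, mul_div_assoc, div_self (hMpos v).ne', mul_one]
    ring
  set hW := fun v : EuclideanSpace ℝ (Fin d) =>
    (f v * ⟪v, n⟫ - μ * (M v * ⟪v, n⟫)) + Real.log μ * (f v * ⟪v, n⟫) with hWdef
  have hWint : Integrable hW :=
    (hfvn.sub (hMb.const_mul μ)).add (hfvn.const_mul (Real.log μ))
  have hpt : ∀ v ∈ Sp, hW v ≤ g v := by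
    intro v hv
    have hv' : (0:ℝ) < ⟪v, n⟫ := hv
    have hMv := hMpos v
    have ha : 0 < μ * M v := mul_pos hmupos hMv
    have htan := tangent_ineq (hf0 v) ha
    rcases eq_or_lt_of_le (hf0 v) with hfv | hfv
    · show (f v * ⟪v, n⟫ - μ * (M v * ⟪v, n⟫)) + Real.log μ * (f v * ⟪v, n⟫)
        ≤ f v * Real.log (f v / M v) * ⟪v, n⟫
      rw [← hfv]
      have h1 : 0 < μ * (M v * ⟪v, n⟫) := mul_pos hmupos (mul_pos hMv hv')
      simp only [zero_mul, mul_zero, zero_sub, add_zero, zero_div]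
      linarith
    · have hlog : Real.log (f v / M v) = Real.log (f v / (μ * M v)) + Real.log μ := by
        rw [← Real.log_mul (div_pos hfv ha).ne' hmupos.ne']
        congr 1
        field_simp
      show (f v * ⟪v, n⟫ - μ * (M v * ⟪v, n⟫)) + Real.log μ * (f v * ⟪v, n⟫)
        ≤ f v * Real.log (f v / M v) * ⟪v, n⟫
      rw [hlog]
      have hmm := mul_le_mul_of_nonneg_right htan hv'.le
      have expand : f v * (Real.log (f v / (μ * M v)) + Real.log μ) * ⟪v, n⟫
          = f v * Real.log (f v / (μ * M v)) * ⟪v, n⟫ + Real.log μ * (f v * ⟪v, n⟫) := by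
        ring
      rw [expand]
      linarith [hmm]
  have hposI : (∫ v in Sp, hW v) ≤ ∫ v in Sp, g v :=
    setIntegral_mono_on hWint.integrableOn hgint.integrableOn hSpm hpt
  have hWval : (∫ v in Sp, hW v) =
      ((∫ v in Sp, f v * ⟪v, n⟫) - μ * ∫ v in Sp, M v * ⟪v, n⟫)
        + Real.log μ * ∫ v in Sp, f v * ⟪v, n⟫ := by
    have i1 : Integrable (fun v : EuclideanSpace ℝ (Fin d) => f v * ⟪v, n⟫) := hfvn
    have i2 : Integrable (fun v : EuclideanSpace ℝ (Fin d) => μ * (M v * ⟪v, n⟫)) :=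
      hMb.const_mul μ
    have i3 : Integrable (fun v : EuclideanSpace ℝ (Fin d) =>
      Real.log μ * (f v * ⟪v, n⟫)) := hfvn.const_mul _
    have i12 : Integrable (fun v : EuclideanSpace ℝ (Fin d) =>
      f v * ⟪v, n⟫ - μ * (M v * ⟪v, n⟫)) := i1.sub i2
    rw [hWdef]
    beta_reduce
    rw [integral_add i12.integrableOn i3.integrableOn,
      integral_sub i1.integrableOn i2.integrableOn,
      integral_const_mul, integral_const_mul]
  rw [hsplit, hneg, hIflip]
  have hkey := le_trans (le_of_eq hWval.symm) hposI
  have he : Real.log μ * (∫ v in Sp, f v * ⟪v, n⟫)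
      = μ * Real.log μ * ∫ v in Sp, M v * ⟪v, n⟫ := by
    rw [← hmuI]; ring
  linarith [hkey, hmuI, he]
end
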